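/- arXiv:0903.3024 — 2 statements merged into one kernel-verified Lean document; each statement's English description precedes it below -/
import Mathlib

section
/- Let B ⪰ 0, M ⪰ 0 be n×n real positive semidefinite matrices and N ≻ 0 positive definite, μ > 0, and define Ñ = (N^{-1} + μ^{-1} M)^{-1}. If B M = 0, then det((B + Ñ) Ñ^{-1}) = det((B + N) N^{-1}). -/
/-! With `S = N⁻¹ + μ⁻¹ • M`, which is positive definite and hence invertible, both sides have the
form `det ((B + A) * A⁻¹) = det (B * A⁻¹ + 1)`, and `B * S = B * N⁻¹` because `B * M = 0`. -/

namespace Matrix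

theorem add_mul_nonsing_inv {n R : Type*} [Fintype n] [DecidableEq n] [CommRing R]
    (B A : Matrix n n R) (hA : IsUnit A.det) : (B + A) * A⁻¹ = B * A⁻¹ + 1 := by
  rw [add_mul, mul_nonsing_inv A hA]

end Matrix

open Matrix in
theorem enhancement_det_ratio_general {n : ℕ} (B M N : Matrix (Fin n) (Fin n) ℝ) (μ : ℝ)
    (hM : M.PosSemidef) (hN : N.PosDef) (hμ : 0 < μ)
    (hBM : B * M = 0) :
    ((B + (N⁻¹ + μ⁻¹ • M)⁻¹) * ((N⁻¹ + μ⁻¹ • M)⁻¹)⁻¹).det = ((B + N) * N⁻¹).det := by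
  have hS : IsUnit (N⁻¹ + μ⁻¹ • M).det := (isUnit_iff_isUnit_det _).1
    (hN.inv.add_posSemidef (hM.smul (inv_nonneg.2 hμ.le))).isUnit
  rw [add_mul_nonsing_inv _ _ (isUnit_nonsing_inv_det _ hS),
    add_mul_nonsing_inv _ _ ((isUnit_iff_isUnit_det _).1 hN.isUnit),
    nonsing_inv_nonsing_inv _ hS, mul_add, Matrix.mul_smul, hBM, smul_zero, add_zero]

theorem enhancement_det_ratio {n : ℕ} (B M N : Matrix (Fin n) (Fin n) ℝ) (μ : ℝ)
    (hB : B.PosSemidef) (hM : M.PosSemidef) (hN : N.PosDef) (hμ : 0 < μ)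
    (hBM : B * M = 0) :
    ((B + (N⁻¹ + μ⁻¹ • M)⁻¹) * ((N⁻¹ + μ⁻¹ • M)⁻¹)⁻¹).det = ((B + N) * N⁻¹).det :=
  enhancement_det_ratio_general B M N μ hM hN hμ hBM
end

section
/- Let S ⪰ B ⪰ 0 and N₀ ≻ 0 be n×n real symmetric matrices, M ⪰ 0 positive semidefinite with (S − B) M = 0, and define Ñ₀ by (B + Ñ₀)^{-1} = (B + N₀)^{-1} + M (assuming the right side is invertible with inverse exceeding B so that Ñ₀ ≻ 0). Then det((S + Ñ₀)(B + Ñ₀)^{-1}) = det((S + N₀)(B + N₀)^{-1}). -/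
/-! Since `B + Ñ₀` and `B + N₀` are invertible, `(S + N)(B + N)⁻¹ = (S - B)(B + N)⁻¹ + 1` for
`N = Ñ₀, N₀`. Substituting `(B + Ñ₀)⁻¹ = (B + N₀)⁻¹ + M`, the extra term `(S - B) M` vanishes by
complementary slackness, so the two matrices themselves coincide, not only their determinants. -/

namespace Matrix

variable {ι R : Type*} [Fintype ι] [DecidableEq ι] [CommRing R]

theorem add_mul_nonsing_inv_eq_sub_mul_nonsing_inv_add_one (S B N : Matrix ι ι R)
    (h : IsUnit (B + N).det) : (S + N) * (B + N)⁻¹ = (S - B) * (B + N)⁻¹ + 1 := by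
  rw [← mul_nonsing_inv (B + N) h, ← add_mul, ← add_assoc, sub_add_cancel]

theorem isUnit_det_add_of_posSemidef_of_posDef {K : Type*} [Field K] [PartialOrder K]
    [StarRing K] [AddLeftMono K] {B N : Matrix ι ι K}
    (hB : B.PosSemidef) (hN : N.PosDef) : IsUnit (B + N).det :=
  (isUnit_iff_isUnit_det _).mp (PosDef.posSemidef_add hB hN).isUnit

end Matrix

theorem enhancement_det_ratio_S_general {n : ℕ} (S B N₀ M Nt : Matrix (Fin n) (Fin n) ℝ)
    (hB : B.PosSemidef)
    (hN₀ : N₀.PosDef)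
    (hslack : (S - B) * M = 0)
    (hNt : Nt.PosDef)
    (hdef : (B + Nt)⁻¹ = (B + N₀)⁻¹ + M) :
    ((S + Nt) * (B + Nt)⁻¹).det = ((S + N₀) * (B + N₀)⁻¹).det := by
  congr 1
  calc (S + Nt) * (B + Nt)⁻¹ = (S - B) * (B + Nt)⁻¹ + 1 :=
        Matrix.add_mul_nonsing_inv_eq_sub_mul_nonsing_inv_add_one S B Nt
          (Matrix.isUnit_det_add_of_posSemidef_of_posDef hB hNt)
    _ = (S - B) * (B + N₀)⁻¹ + 1 := by rw [hdef, Matrix.mul_add, hslack, add_zero]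
    _ = (S + N₀) * (B + N₀)⁻¹ :=
        (Matrix.add_mul_nonsing_inv_eq_sub_mul_nonsing_inv_add_one S B N₀
          (Matrix.isUnit_det_add_of_posSemidef_of_posDef hB hN₀)).symm

theorem enhancement_det_ratio_S {n : ℕ} (S B N₀ M Nt : Matrix (Fin n) (Fin n) ℝ)
    (hS : S.IsSymm) (hBsymm : B.IsSymm)
    (hSB : (S - B).PosSemidef) (hB : B.PosSemidef)
    (hN₀ : N₀.PosDef) (hM : M.PosSemidef)
    (hslack : (S - B) * M = 0)
    (hNt : Nt.PosDef)
    (hdef : (B + Nt)⁻¹ = (B + N₀)⁻¹ + M) :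
    ((S + Nt) * (B + Nt)⁻¹).det = ((S + N₀) * (B + N₀)⁻¹).det :=
  enhancement_det_ratio_S_general S B N₀ M Nt hB hN₀ hslack hNt hdef
end
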